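/- With γ₁ = a₂a₃⁻¹ and γ₂ = a₃⁻¹a₂ in G = ⟨⟨a₁,a₃⟩⟩ ⊂ Aut(T), one has γ₁γ₂ = γ₂γ₁; consequently the subgroup U = ⟨⟨γ₁, γ₂⟩⟩ is abelian. -/

import Mathlib

open Equiv

/-- Vertices of the infinite rooted binary tree: finite words over `Bool`.
The parent of a nonempty word is `dropLast`. -/
abbrev Wd := List Bool

/-- The group `Ω = Aut(T)` of automorphisms of the infinite rooted binary tree,
realized as the subgroup of permutations of the vertex set preserving length
(levels) and the parent relation. -/
def OmegaSG : Subgroup (Equiv.Perm Wd) where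
  carrier := {σ | (∀ w, (σ w).length = w.length) ∧ ∀ w, (σ w).dropLast = σ w.dropLast}
  one_mem' := ⟨fun _ => rfl, fun _ => rfl⟩
  mul_mem' := by
    rintro σ τ ⟨hσl, hσd⟩ ⟨hτl, hτd⟩
    refine ⟨fun w => ?_, fun w => ?_⟩
    · simp [Equiv.Perm.mul_apply, hσl, hτl]
    · simp [Equiv.Perm.mul_apply, hσd, hτd]
  inv_mem' := by
    rintro σ ⟨hl, hd⟩
    refine ⟨fun w => ?_, fun w => ?_⟩
    · have := hl (σ⁻¹ w)
      rw [Equiv.Perm.inv_def, Equiv.apply_symm_apply] at this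
      exact this.symm
    · apply σ.injective
      have := hd (σ⁻¹ w)
      rw [show σ (σ⁻¹ w) = w from σ.apply_symm_apply w] at this
      rw [← this]
      simp

/-- The section pairing: `(u,v)` acts as `u` on the subtree rooted at `false`
and as `v` on the subtree rooted at `true`. -/
def pairFun (f g : Wd → Wd) : Wd → Wd
  | [] => []
  | false :: w => false :: f w
  | true :: w => true :: g w

@[simp] lemma pairFun_nil (f g : Wd → Wd) : pairFun f g [] = [] := rfl
@[simp] lemma pairFun_false (f g : Wd → Wd) (w : Wd) :
    pairFun f g (false :: w) = false :: f w := rfl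
@[simp] lemma pairFun_true (f g : Wd → Wd) (w : Wd) :
    pairFun f g (true :: w) = true :: g w := rfl

lemma pairFun_comp (f g f' g' : Wd → Wd) (hf : ∀ w, f (f' w) = w) (hg : ∀ w, g (g' w) = w) :
    ∀ w, pairFun f g (pairFun f' g' w) = w := by
  rintro (_ | ⟨(_|_), w⟩) <;> simp [hf, hg]

/-- The permutation `(u,v)` of the tree. -/
def pairPerm (u v : Equiv.Perm Wd) : Equiv.Perm Wd where
  toFun := pairFun u v
  invFun := pairFun u.symm v.symm
  left_inv := pairFun_comp _ _ _ _ (fun w => u.symm_apply_apply w) (fun w => v.symm_apply_apply w)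
  right_inv := pairFun_comp _ _ _ _ (fun w => u.apply_symm_apply w) (fun w => v.apply_symm_apply w)

@[simp] lemma pairPerm_apply (u v : Equiv.Perm Wd) (w : Wd) :
    pairPerm u v w = pairFun u v w := rfl

/-- The first-level swap `σ`. -/
def swapPerm : Equiv.Perm Wd where
  toFun w := match w with | [] => [] | b :: w => (!b) :: w
  invFun w := match w with | [] => [] | b :: w => (!b) :: w
  left_inv := by rintro (_ | ⟨b, w⟩) <;> simp
  right_inv := by rintro (_ | ⟨b, w⟩) <;> simp

@[simp] lemma swapPerm_nil : swapPerm [] = [] := rfl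
@[simp] lemma swapPerm_cons (b : Bool) (w : Wd) : swapPerm (b :: w) = (!b) :: w := rfl

lemma swapPerm_mem : swapPerm ∈ OmegaSG := by
  constructor
  · rintro (_ | ⟨b, w⟩) <;> simp
  · rintro (_ | ⟨b, w⟩)
    · simp
    · rcases eq_or_ne w [] with rfl | hw
      · simp
      · simp only [swapPerm_cons, List.dropLast_cons_of_ne_nil hw]

lemma mem_omega_length {u : Equiv.Perm Wd} (hu : u ∈ OmegaSG) (w : Wd) :
    (u w).length = w.length := hu.1 w

lemma mem_omega_ne_nil {u : Equiv.Perm Wd} (hu : u ∈ OmegaSG) {w : Wd} (hw : w ≠ []) :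
    u w ≠ [] := by
  intro h
  exact hw (List.eq_nil_of_length_eq_zero (by rw [← hu.1 w, h]; rfl))

lemma mem_omega_nil {u : Equiv.Perm Wd} (hu : u ∈ OmegaSG) : u [] = [] :=
  List.eq_nil_of_length_eq_zero (hu.1 [])

lemma pairPerm_mem {u v : Equiv.Perm Wd} (hu : u ∈ OmegaSG) (hv : v ∈ OmegaSG) :
    pairPerm u v ∈ OmegaSG := by
  constructor
  · rintro (_ | ⟨(_|_), w⟩) <;> simp [hu.1, hv.1]
  · rintro (_ | ⟨(_|_), w⟩)
    · simp
    · rcases eq_or_ne w [] with rfl | hw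
      · simp [mem_omega_nil hu]
      · simp only [pairPerm_apply, pairFun_false, List.dropLast_cons_of_ne_nil hw,
          List.dropLast_cons_of_ne_nil (mem_omega_ne_nil hu hw)]
        rw [hu.2]
    · rcases eq_or_ne w [] with rfl | hw
      · simp [mem_omega_nil hv]
      · simp only [pairPerm_apply, pairFun_true, List.dropLast_cons_of_ne_nil hw,
          List.dropLast_cons_of_ne_nil (mem_omega_ne_nil hv hw)]
        rw [hv.2]

/-- `(u,v)` as an element of `Ω`. -/
def pairOm (u v : OmegaSG) : OmegaSG := ⟨pairPerm u.1 v.1, pairPerm_mem u.2 v.2⟩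

/-- `σ` as an element of `Ω`. -/
def swapOm : OmegaSG := ⟨swapPerm, swapPerm_mem⟩

/-! ### Levels, restriction, sign, odometers -/

/-- Level `n` of the tree: words of length `n`. -/
abbrev Lv (n : ℕ) := {w : Wd // w.length = n}

instance fintypeLv (n : ℕ) : Fintype (Lv n) := by
  apply Fintype.ofSurjective (fun g : Fin n → Bool => (⟨List.ofFn g, List.length_ofFn (f := g)⟩ : Lv n))
  rintro ⟨w, rfl⟩
  exact ⟨w.get, Subtype.ext (List.ofFn_get w)⟩

/-- The permutation induced by `g ∈ Ω` on level `n`. -/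
def levelPerm (n : ℕ) (g : OmegaSG) : Equiv.Perm (Lv n) where
  toFun w := ⟨g.1 w.1, by rw [mem_omega_length g.2, w.2]⟩
  invFun w := ⟨(g⁻¹ : OmegaSG).1 w.1, by rw [mem_omega_length (g⁻¹ : OmegaSG).2, w.2]⟩
  left_inv w := Subtype.ext (by simp)
  right_inv w := Subtype.ext (by simp)

/-- Restriction to level `n` as a group homomorphism. -/
def levelHom (n : ℕ) : OmegaSG →* Equiv.Perm (Lv n) where
  toFun := levelPerm n
  map_one' := Equiv.ext fun w => Subtype.ext rfl
  map_mul' g h := Equiv.ext fun w => Subtype.ext rfl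

/-- `sgn_n`: the sign of the permutation induced on level `n`. -/
noncomputable def sgn (n : ℕ) (g : OmegaSG) : ℤˣ := Equiv.Perm.sign (levelPerm n g)

/-- An odometer: an element acting transitively on every level of the tree. -/
def IsOdometer (g : OmegaSG) : Prop :=
  ∀ n : ℕ, ∀ v w : Lv n, ∃ k : ℤ, ((g ^ k : OmegaSG) : Equiv.Perm Wd) v.1 = w.1

/-! ### The profinite topology on `Aut(T)` -/

instance : TopologicalSpace Wd := ⊥
instance : DiscreteTopology Wd := ⟨rfl⟩
instance : TopologicalSpace (Equiv.Perm Wd) :=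
  TopologicalSpace.induced (fun g => (g : Wd → Wd)) Pi.topologicalSpace

lemma continuous_permCoe : Continuous (fun g : Equiv.Perm Wd => (g : Wd → Wd)) :=
  continuous_induced_dom

lemma continuous_permApply (w : Wd) : Continuous fun g : Equiv.Perm Wd => g w :=
  (continuous_apply w).comp continuous_permCoe

instance : IsTopologicalGroup (Equiv.Perm Wd) where
  continuous_mul := by
    apply continuous_induced_rng.2
    apply continuous_pi
    intro w
    rw [continuous_discrete_rng]
    intro y
    have h : (fun p : Equiv.Perm Wd × Equiv.Perm Wd => ((p.1 * p.2 : Equiv.Perm Wd) : Wd → Wd) w) ⁻¹' {y}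
        = ⋃ x : Wd, {p : Equiv.Perm Wd × Equiv.Perm Wd | p.2 w = x} ∩ {p | p.1 x = y} := by
      ext p
      simp only [Set.mem_preimage, Set.mem_singleton_iff, Set.mem_iUnion, Set.mem_inter_iff,
        Set.mem_setOf_eq, Equiv.Perm.mul_apply]
      constructor
      · intro hh; exact ⟨p.2 w, rfl, hh⟩
      · rintro ⟨x, rfl, hh⟩; exact hh
    show IsOpen ((fun p : Equiv.Perm Wd × Equiv.Perm Wd =>
      ((p.1 * p.2 : Equiv.Perm Wd) : Wd → Wd) w) ⁻¹' {y})
    rw [h]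
    refine isOpen_iUnion fun x => IsOpen.inter ?_ ?_
    · exact IsOpen.preimage ((continuous_permApply w).comp continuous_snd) (isOpen_discrete {x})
    · exact IsOpen.preimage ((continuous_permApply x).comp continuous_fst) (isOpen_discrete {y})
  continuous_inv := by
    apply continuous_induced_rng.2
    apply continuous_pi
    intro w
    rw [continuous_discrete_rng]
    intro y
    have h : (fun g : Equiv.Perm Wd => ((g⁻¹ : Equiv.Perm Wd) : Wd → Wd) w) ⁻¹' {y}
        = {g : Equiv.Perm Wd | g y = w} := by
      ext g
      simp only [Set.mem_preimage, Set.mem_singleton_iff, Set.mem_setOf_eq]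
      constructor
      · rintro rfl; simp
      · intro hh; rw [← hh]; simp
    show IsOpen ((fun g : Equiv.Perm Wd => ((g⁻¹ : Equiv.Perm Wd) : Wd → Wd) w) ⁻¹' {y})
    rw [h]
    exact IsOpen.preimage (continuous_permApply y) (isOpen_discrete {w})

/-! ### The recursive generators `a₁ = σ`, `a₂ = (a₃⁻¹, a₂⁻¹)σ`, `a₃ = (a₂, a₃)` -/

mutual
  /-- The underlying function of `a₂`. -/
  def pA : Wd → Wd
    | [] => []
    | false :: w => true :: piA w
    | true :: w => false :: qiA w
  /-- The underlying function of `a₃`. -/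
  def qA : Wd → Wd
    | [] => []
    | false :: w => false :: pA w
    | true :: w => true :: qA w
  /-- The underlying function of `a₂⁻¹`. -/
  def piA : Wd → Wd
    | [] => []
    | false :: w => true :: qA w
    | true :: w => false :: pA w
  /-- The underlying function of `a₃⁻¹`. -/
  def qiA : Wd → Wd
    | [] => []
    | false :: w => false :: piA w
    | true :: w => true :: qiA w
end

lemma a_inv_lemma : ∀ w : Wd, pA (piA w) = w ∧ piA (pA w) = w ∧ qA (qiA w) = w ∧ qiA (qA w) = w := by
  intro w
  induction w with
  | nil => simp [pA, qA, piA, qiA]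
  | cons b w ih =>
    cases b <;>
      simp [pA, qA, piA, qiA, ih.1, ih.2.1, ih.2.2.1, ih.2.2.2]

/-- The generator `a₂`. -/
def a2 : Equiv.Perm Wd where
  toFun := pA
  invFun := piA
  left_inv w := (a_inv_lemma w).2.1
  right_inv w := (a_inv_lemma w).1

/-- The generator `a₃`. -/
def a3 : Equiv.Perm Wd where
  toFun := qA
  invFun := qiA
  left_inv w := (a_inv_lemma w).2.2.2
  right_inv w := (a_inv_lemma w).2.2.1

lemma a_length_lemma : ∀ w : Wd, (pA w).length = w.length ∧ (qA w).length = w.length ∧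
    (piA w).length = w.length ∧ (qiA w).length = w.length := by
  intro w
  induction w with
  | nil => simp [pA, qA, piA, qiA]
  | cons b w ih =>
    cases b <;>
      simp [pA, qA, piA, qiA, ih.1, ih.2.1, ih.2.2.1, ih.2.2.2]

lemma a_ne_nil {f : Wd → Wd} (hf : ∀ w : Wd, (f w).length = w.length) {w : Wd} (hw : w ≠ []) :
    f w ≠ [] := by
  intro h
  exact hw (List.eq_nil_of_length_eq_zero (by rw [← hf w, h]; rfl))

lemma a_dropLast_lemma : ∀ w : Wd, (pA w).dropLast = pA w.dropLast ∧
    (qA w).dropLast = qA w.dropLast ∧ (piA w).dropLast = piA w.dropLast ∧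
    (qiA w).dropLast = qiA w.dropLast := by
  intro w
  induction w with
  | nil => simp [pA, qA, piA, qiA]
  | cons b w ih =>
    rcases eq_or_ne w [] with rfl | hw
    · cases b <;> simp [pA, qA, piA, qiA]
    · have hp := a_ne_nil (fun w => (a_length_lemma w).1) hw
      have hq := a_ne_nil (fun w => (a_length_lemma w).2.1) hw
      have hpi := a_ne_nil (fun w => (a_length_lemma w).2.2.1) hw
      have hqi := a_ne_nil (fun w => (a_length_lemma w).2.2.2) hw
      cases b <;>
        simp [pA, qA, piA, qiA, List.dropLast_cons_of_ne_nil hw,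
          List.dropLast_cons_of_ne_nil hp, List.dropLast_cons_of_ne_nil hq,
          List.dropLast_cons_of_ne_nil hpi, List.dropLast_cons_of_ne_nil hqi,
          ih.1, ih.2.1, ih.2.2.1, ih.2.2.2]

lemma a2_mem : a2 ∈ OmegaSG :=
  ⟨fun w => (a_length_lemma w).1, fun w => (a_dropLast_lemma w).1⟩

lemma a3_mem : a3 ∈ OmegaSG :=
  ⟨fun w => (a_length_lemma w).2.1, fun w => (a_dropLast_lemma w).2.1⟩

/-- `a₁ = σ` as an element of `Ω`. -/
def A1 : OmegaSG := swapOm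
/-- `a₂` as an element of `Ω`. -/
def A2 : OmegaSG := ⟨a2, a2_mem⟩
/-- `a₃` as an element of `Ω`. -/
def A3 : OmegaSG := ⟨a3, a3_mem⟩

/-- `G = ⟨⟨a₁, a₃⟩⟩`, the topological closure of the subgroup generated by `a₁` and `a₃`:
a model of the geometric iterated monodromy group of `f(x) = 2/(x-1)²`. -/
noncomputable def Ggrp : Subgroup OmegaSG :=
  (Subgroup.closure {A1, A3}).topologicalClosure

/-- The normal closure in `G` of the closed subgroup generated by an element `c`:
the closed subgroup generated by all `G`-conjugates of `c`. -/
noncomputable def nclG (c : OmegaSG) : Subgroup OmegaSG :=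
  (Subgroup.closure {x | ∃ g ∈ Ggrp, x = g * c * g⁻¹}).topologicalClosure

/-- `U`, the normal closure in `G` of `⟨⟨a₂a₃⁻¹⟩⟩`. -/
noncomputable def Ugrp : Subgroup OmegaSG := nclG (A2 * A3⁻¹)

/-- `H₁`, the normal closure in `G` of `⟨⟨a₁⟩⟩`. -/
noncomputable def H1grp : Subgroup OmegaSG := nclG A1

/-- `H₃`, the normal closure in `G` of `⟨⟨a₃⟩⟩`. -/
noncomputable def H3grp : Subgroup OmegaSG := nclG A3

/-! The relations `a₁a₂a₃ = 1`, `a₁² = a₂⁴ = a₃⁴ = 1` present the Euclidean triangle group of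
type `(2,4,4)`, in which `γ₁ = a₂a₃⁻¹` and `γ₂ = a₃⁻¹a₂` are translations. Accordingly everything
follows from these relations alone: `γ₁` and `γ₂` commute, and conjugation by `a₁` and `a₃` permutes
`{γ₁^±1, γ₂^±1}`. Hence the closed subgroup `⟨⟨γ₁, γ₂⟩⟩` is normalized by `G`, so it contains every
`G`-conjugate of `γ₁`, and it is abelian as the closure of an abelian subgroup. In `Aut(T)` the
relations come from the wreath recursion; in particular `a₃⁴ = (a₂⁴, a₃⁴) = (1, a₃⁴)` forces
`a₃⁴ = 1`. -/

theorem Subgroup.closure_insert_inv {G : Type*} [Group G] (a : G) (s : Set G) :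
    Subgroup.closure (insert a⁻¹ s) = Subgroup.closure (insert a s) := by
  simp only [Set.insert_eq, Subgroup.closure_union, ← Set.inv_singleton, Subgroup.closure_inv]

section TopologicalGroup

variable {G : Type*} [Group G] [TopologicalSpace G] [IsTopologicalGroup G]

theorem conj_mem_topologicalClosure {H : Subgroup G} {g h : G}
    (hg : g ∈ (Subgroup.normalizer H).topologicalClosure) (hh : h ∈ H.topologicalClosure) :
    g * h * g⁻¹ ∈ H.topologicalClosure := by
  have hN : ∀ n ∈ Subgroup.normalizer H, n * h * n⁻¹ ∈ H.topologicalClosure := fun n hn =>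
    map_mem_closure (f := fun k => n * k * n⁻¹) (IsTopologicalGroup.continuous_conj n) hh
      fun m hm => (Subgroup.mem_normalizer_iff.1 hn m).1 hm
  have hclosed : IsClosed {n : G | n * h * n⁻¹ ∈ H.topologicalClosure} :=
    H.isClosed_topologicalClosure.preimage
      ((continuous_id.mul continuous_const).mul continuous_inv)
  exact closure_minimal hN hclosed hg

theorem mul_comm_of_mem_topologicalClosure_closure [T2Space G] {s : Set G}
    (hs : ∀ x ∈ s, ∀ y ∈ s, x * y = y * x) {x y : G}
    (hx : x ∈ (Subgroup.closure s).topologicalClosure)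
    (hy : y ∈ (Subgroup.closure s).topologicalClosure) : x * y = y * x := by
  have hle : (Subgroup.closure s).topologicalClosure ≤ Subgroup.centralizer (Set.centralizer s) :=
    Subgroup.topologicalClosure_minimal _ (Subgroup.closure_le_centralizer_centralizer s)
      (Set.isClosed_centralizer _)
  exact Set.centralizer_centralizer_comm_of_comm hs x (hle hx) y (hle hy)

end TopologicalGroup

section Relations

variable {G : Type*} [Group G] {a₁ a₂ a₃ : G}

theorem commute_mul_inv_inv_mul (h : a₁ * a₂ * a₃ = 1) (h₁ : a₁ ^ 2 = 1) (h₂ : a₂ ^ 4 = 1)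
    (h₃ : a₃ ^ 4 = 1) : Commute (a₂ * a₃⁻¹) (a₃⁻¹ * a₂) := by
  obtain rfl : a₃ = (a₁ * a₂)⁻¹ := eq_inv_of_mul_eq_one_right h
  -- modulo the relators `a₁²` and `a₂⁴`, `γ₁γ₂(γ₂γ₁)⁻¹` is `a₂(a₁a₂)⁴a₂⁻¹ = a₂a₃⁻⁴a₂⁻¹`
  calc a₂ * (a₁ * a₂)⁻¹⁻¹ * ((a₁ * a₂)⁻¹⁻¹ * a₂)
      = a₂ * a₁ * a₂ * a₁ * a₂ * (a₁ ^ 2)⁻¹ * a₁ * (a₂ ^ 4)⁻¹ * a₂ * (a₁ ^ 2)⁻¹ * a₁ *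
          (a₁ * a₂ * a₂ * (a₂ * a₁ * a₂)) := by
        simp only [pow_succ, pow_zero, one_mul]; group
    _ = a₂ * ((a₁ * a₂)⁻¹ ^ 4)⁻¹ * a₂⁻¹ * (a₁ * a₂ * a₂ * (a₂ * a₁ * a₂)) := by
        rw [h₁, h₂]; simp only [pow_succ, pow_zero, one_mul]; group
    _ = (a₁ * a₂)⁻¹⁻¹ * a₂ * (a₂ * (a₁ * a₂)⁻¹⁻¹) := by rw [h₃]; group

theorem conj_mul_inv_eq_inv (h : a₁ * a₂ * a₃ = 1) (h₁ : a₁ ^ 2 = 1) (h₃ : a₃ ^ 4 = 1) :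
    a₁ * (a₂ * a₃⁻¹) * a₁⁻¹ = (a₂ * a₃⁻¹)⁻¹ := by
  obtain rfl : a₂ = a₁⁻¹ * a₃⁻¹ := eq_inv_mul_of_mul_eq (eq_inv_of_mul_eq_one_left h)
  calc a₁ * (a₁⁻¹ * a₃⁻¹ * a₃⁻¹) * a₁⁻¹ = (a₃ ^ 4)⁻¹ * a₃ * a₃ * (a₁ ^ 2)⁻¹ * a₁ := by
        simp only [pow_succ, pow_zero, one_mul]; group
    _ = (a₁⁻¹ * a₃⁻¹ * a₃⁻¹)⁻¹ := by
        rw [h₁, h₃]; simp only [mul_inv_rev, inv_inv, inv_one, one_mul, mul_one, mul_assoc]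

theorem conj_inv_mul_eq_inv (h : a₁ * a₂ * a₃ = 1) (h₁ : a₁ ^ 2 = 1) (h₂ : a₂ ^ 4 = 1) :
    a₁ * (a₃⁻¹ * a₂) * a₁⁻¹ = (a₃⁻¹ * a₂)⁻¹ := by
  obtain rfl : a₃ = (a₁ * a₂)⁻¹ := eq_inv_of_mul_eq_one_right h
  calc a₁ * ((a₁ * a₂)⁻¹⁻¹ * a₂) * a₁⁻¹ = a₁ ^ 2 * a₂ ^ 4 * a₂⁻¹ * a₂⁻¹ * a₁⁻¹ := by
        simp only [pow_succ, pow_zero, one_mul]; group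
    _ = ((a₁ * a₂)⁻¹⁻¹ * a₂)⁻¹ := by rw [h₁, h₂]; group

theorem conj_mul_inv_eq_inv_mul_inv (h : a₁ * a₂ * a₃ = 1) (h₁ : a₁ ^ 2 = 1) (h₃ : a₃ ^ 4 = 1) :
    a₃ * (a₂ * a₃⁻¹) * a₃⁻¹ = (a₃⁻¹ * a₂)⁻¹ := by
  obtain rfl : a₂ = a₁⁻¹ * a₃⁻¹ := eq_inv_mul_of_mul_eq (eq_inv_of_mul_eq_one_left h)
  calc a₃ * (a₁⁻¹ * a₃⁻¹ * a₃⁻¹) * a₃⁻¹ = a₃ * (a₁ ^ 2)⁻¹ * a₁ * (a₃ ^ 4)⁻¹ * a₃ := by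
        simp only [pow_succ, pow_zero, one_mul]; group
    _ = (a₃⁻¹ * (a₁⁻¹ * a₃⁻¹))⁻¹ := by rw [h₁, h₃]; group

theorem first_mem_normalizer_closure (h : a₁ * a₂ * a₃ = 1) (h₁ : a₁ ^ 2 = 1)
    (h₂ : a₂ ^ 4 = 1) (h₃ : a₃ ^ 4 = 1) :
    a₁ ∈ Subgroup.normalizer (Subgroup.closure {a₂ * a₃⁻¹, a₃⁻¹ * a₂} : Set G) := by
  rw [Subgroup.mem_normalizer_iff_map_conj_eq, MonoidHom.map_closure, Set.image_pair]
  simp only [MonoidHom.coe_coe, MulAut.conj_apply, conj_mul_inv_eq_inv h h₁ h₃,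
    conj_inv_mul_eq_inv h h₁ h₂]
  rw [Subgroup.closure_insert_inv, Set.pair_comm, Subgroup.closure_insert_inv, Set.pair_comm]

theorem third_mem_normalizer_closure (h : a₁ * a₂ * a₃ = 1) (h₁ : a₁ ^ 2 = 1)
    (h₃ : a₃ ^ 4 = 1) :
    a₃ ∈ Subgroup.normalizer (Subgroup.closure {a₂ * a₃⁻¹, a₃⁻¹ * a₂} : Set G) := by
  rw [Subgroup.mem_normalizer_iff_map_conj_eq, MonoidHom.map_closure, Set.image_pair]
  simp only [MonoidHom.coe_coe, MulAut.conj_apply, conj_mul_inv_eq_inv_mul_inv h h₁ h₃,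
    mul_inv_cancel_left]
  rw [Subgroup.closure_insert_inv, Set.pair_comm]

variable [TopologicalSpace G] [IsTopologicalGroup G]

theorem topologicalClosure_closure_conj_eq (h : a₁ * a₂ * a₃ = 1) (h₁ : a₁ ^ 2 = 1)
    (h₂ : a₂ ^ 4 = 1) (h₃ : a₃ ^ 4 = 1) :
    (Subgroup.closure {x | ∃ g ∈ (Subgroup.closure {a₁, a₃}).topologicalClosure,
      x = g * (a₂ * a₃⁻¹) * g⁻¹}).topologicalClosure =
    (Subgroup.closure {a₂ * a₃⁻¹, a₃⁻¹ * a₂}).topologicalClosure := by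
  set V := Subgroup.closure {a₂ * a₃⁻¹, a₃⁻¹ * a₂}
  have hγ₁ : a₂ * a₃⁻¹ ∈ V.topologicalClosure :=
    V.le_topologicalClosure (Subgroup.subset_closure (Set.mem_insert _ _))
  have hG : (Subgroup.closure {a₁, a₃}).topologicalClosure ≤
      (Subgroup.normalizer (V : Set G)).topologicalClosure :=
    Subgroup.topologicalClosure_mono <| (Subgroup.closure_le _).2 <| Set.insert_subset_iff.2
      ⟨first_mem_normalizer_closure h h₁ h₂ h₃,
        Set.singleton_subset_iff.2 (third_mem_normalizer_closure h h₁ h₃)⟩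
  refine le_antisymm ?_ ?_
  · refine Subgroup.topologicalClosure_minimal _ ?_ V.isClosed_topologicalClosure
    rw [Subgroup.closure_le]
    rintro _ ⟨g, hg, rfl⟩
    exact conj_mem_topologicalClosure (hG hg) hγ₁
  · refine Subgroup.topologicalClosure_mono ((Subgroup.closure_le _).2 ?_)
    have ha₃ : a₃⁻¹ ∈ (Subgroup.closure {a₁, a₃}).topologicalClosure :=
      inv_mem (Subgroup.le_topologicalClosure _ (Subgroup.subset_closure (by simp)))
    rintro _ (rfl | rfl)
    · exact Subgroup.subset_closure ⟨1, one_mem _, by group⟩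
    · exact Subgroup.subset_closure ⟨a₃⁻¹, ha₃, by group⟩

end Relations

theorem pairPerm_mul (u v u' v' : Equiv.Perm Wd) :
    pairPerm u v * pairPerm u' v' = pairPerm (u * u') (v * v') := by
  ext (_ | ⟨_ | _, w⟩) <;> rfl

theorem pairPerm_one : pairPerm 1 1 = 1 := by
  ext (_ | ⟨_ | _, w⟩) <;> rfl

theorem pairPerm_pow (u v : Equiv.Perm Wd) (n : ℕ) :
    pairPerm u v ^ n = pairPerm (u ^ n) (v ^ n) := by
  induction n with
  | zero => exact pairPerm_one.symm
  | succ n ih => rw [pow_succ, ih, pairPerm_mul, ← pow_succ, ← pow_succ]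

theorem swapPerm_mul_pairPerm (u v : Equiv.Perm Wd) :
    swapPerm * pairPerm u v = pairPerm v u * swapPerm := by
  ext (_ | ⟨_ | _, w⟩) <;> rfl

theorem swapPerm_sq : swapPerm ^ 2 = 1 := by
  ext (_ | ⟨_ | _, w⟩) <;> rfl

theorem swapPerm_inv : swapPerm⁻¹ = swapPerm :=
  inv_eq_of_mul_eq_one_right (by rw [← sq, swapPerm_sq])

theorem eq_one_of_eq_pairPerm_one {x : Equiv.Perm Wd} (hx : x = pairPerm 1 x) : x = 1 := by
  ext w : 1
  induction w with
  | nil => rw [hx]; rfl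
  | cons b w ih => cases b <;> rw [hx] <;> simp [ih]

theorem a2_eq_pairPerm : a2 = pairPerm a3⁻¹ a2⁻¹ * swapPerm := by
  ext (_ | ⟨_ | _, w⟩) <;> rfl

theorem a3_eq_pairPerm : a3 = pairPerm a2 a3 := by
  ext (_ | ⟨_ | _, w⟩) <;> rfl

theorem a2_mul_a3 : a2 * a3 = swapPerm :=
  calc a2 * a3 = pairPerm a3⁻¹ a2⁻¹ * (swapPerm * pairPerm a2 a3) := by
        rw [← a3_eq_pairPerm, ← mul_assoc, ← a2_eq_pairPerm]
    _ = swapPerm := by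
        rw [swapPerm_mul_pairPerm, ← mul_assoc, pairPerm_mul, inv_mul_cancel, inv_mul_cancel,
          pairPerm_one, one_mul]

theorem a2_sq : a2 ^ 2 = pairPerm swapPerm (a3 * swapPerm * a3⁻¹) :=
  calc a2 ^ 2 = pairPerm a3⁻¹ a2⁻¹ * (swapPerm * pairPerm a3⁻¹ a2⁻¹) * swapPerm := by
        rw [sq, ← mul_assoc, ← a2_eq_pairPerm, mul_assoc, ← a2_eq_pairPerm]
    _ = pairPerm (a2 * a3)⁻¹ (a3 * (a2 * a3)⁻¹ * a3⁻¹) := by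
        rw [swapPerm_mul_pairPerm, ← mul_assoc, pairPerm_mul, mul_assoc, ← sq, swapPerm_sq]
        group
    _ = pairPerm swapPerm (a3 * swapPerm * a3⁻¹) := by
        rw [a2_mul_a3, swapPerm_inv]

theorem a2_pow_four : a2 ^ 4 = 1 := by
  rw [show 4 = 2 * 2 from rfl, pow_mul, a2_sq, pairPerm_pow, conj_pow, swapPerm_sq, mul_one,
    mul_inv_cancel, pairPerm_one]

theorem a3_pow_four : a3 ^ 4 = 1 := by
  refine eq_one_of_eq_pairPerm_one ?_
  calc a3 ^ 4 = pairPerm a2 a3 ^ 4 := by rw [← a3_eq_pairPerm]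
    _ = pairPerm 1 (a3 ^ 4) := by rw [pairPerm_pow, a2_pow_four]

theorem A1_mul_A2_mul_A3 : A1 * A2 * A3 = 1 :=
  Subtype.ext (by rw [mul_assoc]; exact (congrArg (swapPerm * ·) a2_mul_a3).trans swapPerm_sq)

theorem A1_sq : A1 ^ 2 = 1 := Subtype.ext swapPerm_sq

theorem A2_pow_four : A2 ^ 4 = 1 := Subtype.ext a2_pow_four

theorem A3_pow_four : A3 ^ 4 = 1 := Subtype.ext a3_pow_four

instance : T2Space (Equiv.Perm Wd) :=
  T2Space.of_injective_continuous DFunLike.coe_injective continuous_permCoe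

/-- `γ₁ = a₂a₃⁻¹` and `γ₂ = a₃⁻¹a₂` commute; consequently
`U = ⟨⟨γ₁, γ₂⟩⟩` is abelian. -/
theorem stmt8 :
    (A2 * A3⁻¹) * (A3⁻¹ * A2) = (A3⁻¹ * A2) * (A2 * A3⁻¹) ∧
    (Ugrp = (Subgroup.closure {A2 * A3⁻¹, A3⁻¹ * A2}).topologicalClosure) ∧
    (∀ x ∈ Ugrp, ∀ y ∈ Ugrp, x * y = y * x) := by
  have hcomm := commute_mul_inv_inv_mul A1_mul_A2_mul_A3 A1_sq A2_pow_four A3_pow_four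
  have hU : Ugrp = (Subgroup.closure {A2 * A3⁻¹, A3⁻¹ * A2}).topologicalClosure :=
    topologicalClosure_closure_conj_eq A1_mul_A2_mul_A3 A1_sq A2_pow_four A3_pow_four
  refine ⟨hcomm.eq, hU, fun x hx y hy => ?_⟩
  rw [hU] at hx hy
  refine mul_comm_of_mem_topologicalClosure_closure ?_ hx hy
  rintro _ (rfl | rfl) _ (rfl | rfl)
  exacts [rfl, hcomm.eq, hcomm.eq.symm, rfl]
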